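/- arXiv:2205.09966 — 4 statements merged into one kernel-verified Lean document; each statement's English description precedes it below -/
import Mathlib

section
/- Let g be a C² function with g'(θ_g) = 0 satisfying the non-degeneracy condition |g'(u) - g'(v)| ≥ C₂|u - v|^q for all u, v in a compact set, with q ≥ 1 and C₂ > 0. Then for all x > y ≥ θ_g, |g(x) - g(y)| ≥ (C₂/(q+1)) |x - y|^{q+1}. -/
/-!
By convexity `g'` is nondecreasing, so `g' ≥ g'(θ_g) = 0` to the right of `θ_g`, and the
non-degeneracy condition against `θ_g` becomes the pointwise bound
`g'(t) ≥ C₂ (t - θ_g)^q ≥ C₂ (t - y)^q` on `[y, x]`. Integrating it from `y` to `x` gives the claim.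
-/

open Set intervalIntegral

theorem integral_sub_rpow_eq {q : ℝ} (hq : -1 < q) (a b : ℝ) :
    ∫ t in a..b, (t - a) ^ q = (b - a) ^ (q + 1) / (q + 1) := by
  rw [integral_comp_sub_right (fun t => t ^ q), sub_self, integral_rpow (Or.inl hq),
    Real.zero_rpow (by linarith), sub_zero]

theorem ConvexOn.deriv_nonneg_of_le {g : ℝ → ℝ} (hconv : ConvexOn ℝ univ g)
    (hdiff : Differentiable ℝ g) {θ t : ℝ} (hθ : deriv g θ = 0) (hθt : θ ≤ t) :
    0 ≤ deriv g t :=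
  hθ ▸ hconv.monotoneOn_deriv (fun s _ => hdiff s) (mem_univ θ) (mem_univ t) hθt

theorem ConvexOn.mul_rpow_sub_le_deriv {g : ℝ → ℝ} (hconv : ConvexOn ℝ univ g)
    (hdiff : Differentiable ℝ g) {θ y t q C : ℝ} (hθ : deriv g θ = 0) (hq : 0 ≤ q)
    (hC : 0 ≤ C) (hθy : θ ≤ y) (hyt : y ≤ t)
    (hnd : C * |t - θ| ^ q ≤ |deriv g t - deriv g θ|) :
    C * (t - y) ^ q ≤ deriv g t := by
  have hderiv_nonneg := hconv.deriv_nonneg_of_le hdiff hθ (hθy.trans hyt)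
  rw [hθ, sub_zero, abs_of_nonneg hderiv_nonneg, abs_of_nonneg (by linarith)] at hnd
  calc C * (t - y) ^ q ≤ C * (t - θ) ^ q := by gcongr
    _ ≤ deriv g t := hnd

/-- If `g` is `C²` with `g'(θ_g) = 0` and satisfies the non-degeneracy
condition `|g'(u) - g'(v)| ≥ C₂|u - v|^q` on the relevant compact set, then for all
`x > y ≥ θ_g`, `|g(x) - g(y)| ≥ (C₂/(q+1)) |x - y|^(q+1)`. -/
theorem flux_nondegeneracy_integrated
    (g : ℝ → ℝ) (hg : ContDiff ℝ 2 g) (θg : ℝ)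
    (hθ : deriv g θg = 0) (hconv : ConvexOn ℝ Set.univ g)
    (q C₂ : ℝ) (hq : 1 ≤ q) (hC₂ : 0 < C₂)
    (x y : ℝ) (hyx : y < x) (hθy : θg ≤ y)
    (hnd : ∀ u ∈ Set.Icc θg x, ∀ v ∈ Set.Icc θg x,
      C₂ * |u - v| ^ q ≤ |deriv g u - deriv g v|) :
    C₂ / (q + 1) * |x - y| ^ (q + 1) ≤ |g x - g y| := by
  have hdiff : Differentiable ℝ g := hg.differentiable (by norm_num)
  have hq0 : 0 ≤ q := by linarith
  have hlower : ∀ t ∈ Ioo y x, C₂ * (t - y) ^ q ≤ deriv g t := fun t ht =>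
    hconv.mul_rpow_sub_le_deriv hdiff hθ hq0 hC₂.le hθy ht.1.le
      (hnd t ⟨by linarith [ht.1], ht.2.le⟩ θg ⟨le_rfl, by linarith⟩)
  have hcont : Continuous fun t => C₂ * (t - y) ^ q := by
    fun_prop (disch := exact fun _ => Or.inr hq0)
  calc C₂ / (q + 1) * |x - y| ^ (q + 1)
      = ∫ t in y..x, C₂ * (t - y) ^ q := by
        rw [integral_const_mul, integral_sub_rpow_eq (by linarith), abs_of_pos (by linarith)]
        ring
    _ ≤ g x - g y :=
        integral_le_sub_of_hasDeriv_right_of_le hyx.le hdiff.continuous.continuousOn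
          (fun t _ => (hdiff t).hasDerivAt.hasDerivWithinAt)
          hcont.integrableOn_Icc hlower
    _ ≤ |g x - g y| := le_abs_self _
end

section
/- Let f, g : ℝ → ℝ be C¹ strictly convex with critical points θ_f, θ_g, f(θ_f) < g(θ_g), and suppose g is C² and satisfies |g'(u) - g'(v)| ≥ C₂|u - v|^q on compacts (q ≥ 1, C₂ > 0). Then on any compact set K the map x ↦ g₋⁻¹(f(x)) is Hölder continuous with exponent 1/(q+1): there exists C > 0 such that |g₋⁻¹(f(x)) - g₋⁻¹(f(y))| ≤ C |x - y|^{1/(q+1)} for all x, y ∈ K with f(x), f(y) ≥ g(θ_g). -/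
/-!
On a compact range `[a, θg]` the nondegeneracy of `g'` together with `g'(θg) = 0` gives
`C₂ (θg - c)^q ≤ -g'(c)`, and the mean value theorem on the left half of `[u, v]` then gives
`g u - g v ≥ C₂ ((v - u) / 2)^(q+1)` for `a ≤ u ≤ v ≤ θg`. The values `g₋⁻¹(f x)` for `x ∈ K` stay
in such a range, because `f` is bounded on `K` and the convex `g` tends to `∞` at `-∞`. Since `f`
is Lipschitz on `K`, `|g₋⁻¹(f x) - g₋⁻¹(f y)|^(q+1) ≲ |f x - f y| ≲ |x - y|`.
-/

open Set Filter

lemma ConvexOn.tendsto_atBot_atTop_of_deriv_neg {g : ℝ → ℝ} {t : ℝ} (hg : ConvexOn ℝ univ g)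
    (hgt : DifferentiableAt ℝ g t) (ht : deriv g t < 0) : Tendsto g atBot atTop := by
  have tangent : ∀ z < t, g t + deriv g t * (z - t) ≤ g z := fun z hz => by
    have := hg.slope_le_deriv trivial trivial hz hgt
    rw [slope_def_field, div_le_iff₀ (sub_pos.2 hz)] at this
    linarith
  refine tendsto_atTop_mono' _ (eventually_atBot.2 ⟨t - 1, fun z hz => tangent z (by linarith)⟩) ?_
  exact tendsto_atTop_add_const_left _ _
    ((tendsto_atBot_add_const_right _ (-t) tendsto_id).const_mul_atBot_of_neg ht)

lemma StrictConvexOn.bddBelow_setOf_le_of_deriv_eq_zero {g : ℝ → ℝ} {θ : ℝ}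
    (hg : StrictConvexOn ℝ univ g) (hgd : Differentiable ℝ g) (hθ : deriv g θ = 0) (M : ℝ) :
    BddBelow {z | g z ≤ M} := by
  have hneg : deriv g (θ - 1) < 0 :=
    hθ ▸ hg.strictMonoOn_deriv (fun x _ => hgd x) trivial trivial (by linarith)
  obtain ⟨a, ha⟩ := eventually_atBot.1 <|
    (hg.convexOn.tendsto_atBot_atTop_of_deriv_neg (hgd _) hneg).eventually_gt_atTop M
  exact ⟨a, fun z hz => not_lt.1 fun hza => (ha z hza.le).not_ge hz⟩

lemma ConvexOn.mul_rpow_sub_le_neg_deriv {g : ℝ → ℝ} {s : Set ℝ} {C q θ c : ℝ}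
    (hg : ConvexOn ℝ univ g) (hgd : Differentiable ℝ g) (hθ : deriv g θ = 0)
    (hnd : ∀ u ∈ s, ∀ v ∈ s, C * |u - v| ^ q ≤ |deriv g u - deriv g v|)
    (hθs : θ ∈ s) (hc : c ∈ s) (hcθ : c ≤ θ) :
    C * (θ - c) ^ q ≤ -deriv g c := by
  have hgc : deriv g c ≤ 0 := hθ ▸ hg.monotoneOn_deriv (fun x _ => hgd x) trivial trivial hcθ
  simpa [hθ, abs_of_nonneg (sub_nonneg.2 hcθ), abs_of_nonpos hgc] using hnd θ hθs c hc

section NondegenerateDeriv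

variable {g : ℝ → ℝ} {a θ C q u v : ℝ}

lemma mul_half_sub_rpow_le_image_sub_of_le_neg_deriv (hg : Differentiable ℝ g) (hq : 0 ≤ q)
    (hC : 0 ≤ C) (hderiv : ∀ c ∈ Icc a θ, C * (θ - c) ^ q ≤ -deriv g c)
    (hau : a ≤ u) (huv : u ≤ v) (hvθ : v ≤ θ) :
    C * ((v - u) / 2) ^ (q + 1) ≤ g u - g v := by
  set m := (u + v) / 2 with hm
  have hhalf : 0 ≤ (v - u) / 2 := by linarith
  -- On `[u, m]` the distance to `θ` is at least `v - m = (v - u) / 2`.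
  have hslope : ∀ c ∈ interior (Icc u m), deriv g c ≤ -(C * ((v - u) / 2) ^ q) := by
    rw [interior_Icc]
    intro c hc
    have hθc : (v - u) / 2 ≤ θ - c := by linarith [hc.2]
    have := hderiv c ⟨by linarith [hc.1], by linarith [hc.2]⟩
    linarith [mul_le_mul_of_nonneg_left (Real.rpow_le_rpow hhalf hθc hq) hC]
  have hgm : g m - g u ≤ -(C * ((v - u) / 2) ^ q) * (m - u) :=
    (convex_Icc u m).image_sub_le_mul_sub_of_deriv_le hg.continuous.continuousOn
      hg.differentiableOn hslope u ⟨le_rfl, by linarith⟩ m ⟨by linarith, le_rfl⟩ (by linarith)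
  have hanti : AntitoneOn g (Icc a θ) := by
    refine antitoneOn_of_deriv_nonpos (convex_Icc a θ) hg.continuous.continuousOn
      hg.differentiableOn fun c hc => ?_
    have := hderiv c (interior_subset hc)
    linarith [mul_nonneg hC (Real.rpow_nonneg (sub_nonneg.2 (interior_subset hc).2) q)]
  have hgv : g v ≤ g m := hanti ⟨by linarith, by linarith⟩ ⟨by linarith, hvθ⟩ (by linarith)
  calc C * ((v - u) / 2) ^ (q + 1) = C * ((v - u) / 2) ^ q * (m - u) := by
        rw [Real.rpow_add_one' hhalf (by linarith), hm]; ring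
    _ ≤ g u - g v := by linarith

lemma mul_half_abs_sub_rpow_le_abs_image_sub_of_le_neg_deriv (hg : Differentiable ℝ g)
    (hq : 0 ≤ q) (hC : 0 ≤ C) (hderiv : ∀ c ∈ Icc a θ, C * (θ - c) ^ q ≤ -deriv g c)
    (hu : u ∈ Icc a θ) (hv : v ∈ Icc a θ) :
    C * (|u - v| / 2) ^ (q + 1) ≤ |g u - g v| := by
  wlog huv : u ≤ v generalizing u v
  · rw [abs_sub_comm, abs_sub_comm (g u)]
    exact this hv hu (le_of_not_ge huv)
  calc C * (|u - v| / 2) ^ (q + 1) = C * ((v - u) / 2) ^ (q + 1) := by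
        rw [abs_sub_comm, abs_of_nonneg (sub_nonneg.2 huv)]
    _ ≤ g u - g v := mul_half_sub_rpow_le_image_sub_of_le_neg_deriv hg hq hC hderiv hu.1 huv hv.2
    _ ≤ |g u - g v| := le_abs_self _

end NondegenerateDeriv

lemma le_two_mul_rpow_of_mul_half_rpow_le {t d C L p : ℝ} (ht : 0 ≤ t) (hd : 0 ≤ d)
    (hC : 0 < C) (hL : 0 ≤ L) (hp : 0 < p) (h : C * (t / 2) ^ p ≤ L * d) :
    t ≤ 2 * (L / C) ^ (1 / p) * d ^ (1 / p) := by
  have : t / 2 ≤ (L * d / C) ^ p⁻¹ :=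
    (Real.le_rpow_inv_iff_of_pos (by positivity) (by positivity) hp).2
      (by rw [le_div_iff₀ hC]; linarith)
  rw [mul_div_right_comm, Real.mul_rpow (by positivity) hd, ← one_div] at this
  linarith

theorem singular_map_holder_general
    (f g : ℝ → ℝ) (hf : ContDiff ℝ 1 f) (hg : ContDiff ℝ 2 g)
    (hgconv : StrictConvexOn ℝ Set.univ g)
    (θg : ℝ) (hθg : deriv g θg = 0)
    (q : ℝ) (hq : 1 ≤ q)
    (hnd : ∀ K' : Set ℝ, IsCompact K' → ∃ C₂ > 0, ∀ u ∈ K', ∀ v ∈ K',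
      C₂ * |u - v| ^ q ≤ |deriv g u - deriv g v|)
    (ginv : ℝ → ℝ)
    (hginv_right : ∀ w, g θg ≤ w → ginv w ≤ θg ∧ g (ginv w) = w)
    (K : Set ℝ) (hK : IsCompact K) :
    ∃ C > 0, ∀ x ∈ K, ∀ y ∈ K, g θg ≤ f x → g θg ≤ f y →
      |ginv (f x) - ginv (f y)| ≤ C * |x - y| ^ (1 / (q + 1)) := by
  have hgd : Differentiable ℝ g := hg.differentiable (by norm_num)
  obtain ⟨L, hL⟩ := hf.locallyLipschitz.locallyLipschitzOn.exists_lipschitzOnWith_of_compact hK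
  obtain ⟨M, hM⟩ := hK.bddAbove_image hf.continuous.continuousOn
  obtain ⟨a, ha⟩ := hgconv.bddBelow_setOf_le_of_deriv_eq_zero hgd hθg M
  have hmem : ∀ x ∈ K, g θg ≤ f x → ginv (f x) ∈ Icc (min a θg) θg := fun x hx hfx => by
    obtain ⟨hle, hinv⟩ := hginv_right _ hfx
    have hbound : g (ginv (f x)) ≤ M := hinv.symm ▸ hM ⟨x, hx, rfl⟩
    exact ⟨min_le_of_left_le (ha hbound), hle⟩
  obtain ⟨C₂, hC₂, hC₂nd⟩ := hnd (Icc (min a θg) θg) isCompact_Icc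
  have hderiv : ∀ c ∈ Icc (min a θg) θg, C₂ * (θg - c) ^ q ≤ -deriv g c := fun c hc =>
    hgconv.convexOn.mul_rpow_sub_le_neg_deriv hgd hθg hC₂nd ⟨min_le_right _ _, le_rfl⟩ hc hc.2
  refine ⟨2 * ((L + 1) / C₂) ^ (1 / (q + 1)), by positivity, fun x hx y hy hfx hfy => ?_⟩
  have hgap := mul_half_abs_sub_rpow_le_abs_image_sub_of_le_neg_deriv hgd (by linarith) hC₂.le
    hderiv (hmem x hx hfx) (hmem y hy hfy)
  rw [(hginv_right _ hfx).2, (hginv_right _ hfy).2] at hgap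
  have hlip : |f x - f y| ≤ (L + 1) * |x - y| := by
    simpa only [Real.dist_eq] using (hL.dist_le_mul x hx y hy).trans
      (mul_le_mul_of_nonneg_right (by linarith) dist_nonneg)
  exact le_two_mul_rpow_of_mul_half_rpow_le (abs_nonneg _) (abs_nonneg _) hC₂ (by positivity)
    (by linarith) (hgap.trans hlip)

/-- Hölder continuity of the singular map `x ↦ g₋⁻¹(f(x))` with
exponent `1/(q+1)` on any compact set `K`, where `g₋⁻¹` is the inverse of `g`
restricted to `(-∞, θg]` and `g` satisfies the non-degeneracy condition
`|g'(u) - g'(v)| ≥ C₂|u - v|^q` on compacts. -/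
theorem singular_map_holder
    (f g : ℝ → ℝ) (hf : ContDiff ℝ 1 f) (hg : ContDiff ℝ 2 g)
    (hfconv : StrictConvexOn ℝ Set.univ f) (hgconv : StrictConvexOn ℝ Set.univ g)
    (θf θg : ℝ) (hθf : deriv f θf = 0) (hθg : deriv g θg = 0)
    (hmin : f θf < g θg)
    (q : ℝ) (hq : 1 ≤ q)
    (hnd : ∀ K' : Set ℝ, IsCompact K' → ∃ C₂ > 0, ∀ u ∈ K', ∀ v ∈ K',
      C₂ * |u - v| ^ q ≤ |deriv g u - deriv g v|)
    (ginv : ℝ → ℝ)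
    (hginv_left : ∀ z, z ≤ θg → ginv (g z) = z)
    (hginv_right : ∀ w, g θg ≤ w → ginv w ≤ θg ∧ g (ginv w) = w)
    (K : Set ℝ) (hK : IsCompact K) :
    ∃ C > 0, ∀ x ∈ K, ∀ y ∈ K, g θg ≤ f x → g θg ≤ f y →
      |ginv (f x) - ginv (f y)| ≤ C * |x - y| ^ (1 / (q + 1)) :=
  singular_map_holder_general f g hf hg hgconv θg hθg q hq hnd ginv hginv_right K hK
end

section
/- Let 0 < a < b and let z : [a, b] → (-∞, 0] be non-increasing with |z(b)| ≤ K·b for some K > 0. Let H, q > 0 and suppose w : [a,b] → ℝ satisfies |w(t₁) - w(t₂)|^q ≤ H(|z(t₁)| |1/t₁ - 1/t₂| + |z(t₁) - z(t₂)|/t₂) for all a ≤ t₁ < t₂ ≤ b. Then for any partition a ≤ t₁ < t₂ < ⋯ < t_m ≤ b, Σ_{j=1}^{m-1} |w(t_j) - w(t_{j+1})|^q ≤ 2HK·b/a, i.e. TV^{1/q}(w, [a,b]) ≤ 2HK·b/a. -/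
/-!
The estimate on `|w t₁ - w t₂| ^ q` is dominated by the decrease of the potential
`x ↦ H (K b / x + z x / a)`: bound `|z t₁|` by `|z b| ≤ K b` (monotonicity of `z`) and `1 / t₂`
by `1 / a`. Summed over a partition this telescopes, and both halves of the potential drop by at
most `H K b / a` across `[a, b]`.
-/

open Finset

theorem Fin.sum_castSucc_sub_succ {M : Type*} [AddCommGroup M] {m : ℕ} (G : Fin (m + 1) → M) :
    ∑ j : Fin m, (G j.castSucc - G j.succ) = G 0 - G (Fin.last m) := by
  induction m with
  | zero => simp
  | succ n ih =>
    rw [Fin.sum_univ_castSucc]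
    have h := ih (fun i => G i.castSucc)
    simp only [Fin.succ_castSucc] at h ⊢
    rw [h, Fin.succ_last, Fin.castSucc_zero, sub_add_sub_cancel]

/-- `C` stands for `K b`, a bound for `|z|` on `[a, b]`. -/
noncomputable def tracePotential (H C a : ℝ) (z : ℝ → ℝ) (x : ℝ) : ℝ :=
  H * (C / x + z x / a)

lemma modulus_le_tracePotential_sub {H C a s u : ℝ} {z : ℝ → ℝ} (hH : 0 ≤ H) (ha : 0 < a)
    (has : a ≤ s) (hsu : s < u) (hzu : z u ≤ z s) (hzs : z s ≤ 0) (hC : -z s ≤ C) :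
    H * (|z s| * |1 / s - 1 / u| + |z s - z u| / u) ≤
      tracePotential H C a z s - tracePotential H C a z u := by
  have hs : 0 < s := ha.trans_le has
  have hinv : 1 / u ≤ 1 / s := one_div_le_one_div_of_le hs hsu.le
  rw [abs_of_nonpos hzs, abs_of_nonneg (sub_nonneg.2 hinv), abs_of_nonneg (sub_nonneg.2 hzu)]
  have hfirst : -z s * (1 / s - 1 / u) ≤ C * (1 / s - 1 / u) :=
    mul_le_mul_of_nonneg_right hC (sub_nonneg.2 hinv)
  have hsecond : (z s - z u) / u ≤ (z s - z u) / a :=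
    div_le_div_of_nonneg_left (sub_nonneg.2 hzu) ha (has.trans hsu.le)
  calc H * (-z s * (1 / s - 1 / u) + (z s - z u) / u)
      ≤ H * (C * (1 / s - 1 / u) + (z s - z u) / a) := by gcongr
    _ = tracePotential H C a z s - tracePotential H C a z u := by
      simp only [tracePotential]; ring

lemma tracePotential_sub_le {H C a s u : ℝ} {z : ℝ → ℝ} (hH : 0 ≤ H) (ha : 0 < a)
    (has : a ≤ s) (hu : 0 < u) (hzs : z s ≤ 0) (hzu : z u ≤ 0) (hC : -z u ≤ C) :
    tracePotential H C a z s - tracePotential H C a z u ≤ 2 * H * C / a := by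
  have hC0 : 0 ≤ C := by linarith
  have hinv : C / s ≤ C / a := div_le_div_of_nonneg_left hC0 ha has
  have hCu : 0 ≤ C / u := div_nonneg hC0 hu.le
  have hz : z s / a - z u / a ≤ C / a := by
    rw [← sub_div]; exact div_le_div_of_nonneg_right (by linarith) ha.le
  calc tracePotential H C a z s - tracePotential H C a z u
      = H * ((C / s - C / u) + (z s / a - z u / a)) := by simp only [tracePotential]; ring
    _ ≤ H * (C / a + C / a) := by gcongr; linarith
    _ = 2 * H * C / a := by ring

theorem trace_fractional_BV_estimate_general
    (a b : ℝ) (ha : 0 < a) (hab : a < b)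
    (z : ℝ → ℝ) (hz_nonpos : ∀ t ∈ Set.Icc a b, z t ≤ 0)
    (hz_anti : ∀ t₁ ∈ Set.Icc a b, ∀ t₂ ∈ Set.Icc a b, t₁ ≤ t₂ → z t₂ ≤ z t₁)
    (K : ℝ) (hzb : |z b| ≤ K * b)
    (H q : ℝ) (hH : 0 < H)
    (w : ℝ → ℝ)
    (hw : ∀ t₁ ∈ Set.Icc a b, ∀ t₂ ∈ Set.Icc a b, t₁ < t₂ →
      |w t₁ - w t₂| ^ q ≤
        H * (|z t₁| * |1 / t₁ - 1 / t₂| + |z t₁ - z t₂| / t₂))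
    (m : ℕ) (t : Fin (m + 1) → ℝ) (ht : StrictMono t)
    (htI : ∀ j, t j ∈ Set.Icc a b) :
    ∑ j : Fin m, |w (t j.castSucc) - w (t j.succ)| ^ q ≤ 2 * H * K * b / a := by
  have hb : b ∈ Set.Icc a b := ⟨hab.le, le_rfl⟩
  have hzK : ∀ j, -z (t j) ≤ K * b := fun j => by
    have := hz_anti _ (htI j) b hb (htI j).2
    rw [abs_of_nonpos (hz_nonpos b hb)] at hzb
    linarith
  set G := tracePotential H (K * b) a z
  have hstep : ∀ j : Fin m,
      |w (t j.castSucc) - w (t j.succ)| ^ q ≤ G (t j.castSucc) - G (t j.succ) := fun j => by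
    have hlt : t j.castSucc < t j.succ := ht j.castSucc_lt_succ
    exact (hw _ (htI _) _ (htI _) hlt).trans <|
      modulus_le_tracePotential_sub hH.le ha (htI _).1 hlt
        (hz_anti _ (htI _) _ (htI _) hlt.le) (hz_nonpos _ (htI _)) (hzK _)
  calc ∑ j : Fin m, |w (t j.castSucc) - w (t j.succ)| ^ q
      ≤ ∑ j : Fin m, (G (t j.castSucc) - G (t j.succ)) := sum_le_sum fun j _ => hstep j
    _ = G (t 0) - G (t (Fin.last m)) := Fin.sum_castSucc_sub_succ (G ∘ t)
    _ ≤ 2 * H * (K * b) / a :=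
      tracePotential_sub_le hH.le ha (htI 0).1 (ha.trans_le (htI _).1)
        (hz_nonpos _ (htI 0)) (hz_nonpos _ (htI _)) (hzK _)
    _ = 2 * H * K * b / a := by ring

/-- Fractional BV estimate for traces. If `z : [a,b] → (-∞,0]` is
non-increasing with `|z(b)| ≤ K·b`, and `w` satisfies the modulus estimate
`|w(t₁) - w(t₂)|^q ≤ H(|z(t₁)||1/t₁ - 1/t₂| + |z(t₁) - z(t₂)|/t₂)`, then for any
partition of `[a,b]` the `q`-power variation sum of `w` is at most `2HK·b/a`. -/
theorem trace_fractional_BV_estimate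
    (a b : ℝ) (ha : 0 < a) (hab : a < b)
    (z : ℝ → ℝ) (hz_nonpos : ∀ t ∈ Set.Icc a b, z t ≤ 0)
    (hz_anti : ∀ t₁ ∈ Set.Icc a b, ∀ t₂ ∈ Set.Icc a b, t₁ ≤ t₂ → z t₂ ≤ z t₁)
    (K : ℝ) (hK : 0 < K) (hzb : |z b| ≤ K * b)
    (H q : ℝ) (hH : 0 < H) (hq : 0 < q)
    (w : ℝ → ℝ)
    (hw : ∀ t₁ ∈ Set.Icc a b, ∀ t₂ ∈ Set.Icc a b, t₁ < t₂ →
      |w t₁ - w t₂| ^ q ≤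
        H * (|z t₁| * |1 / t₁ - 1 / t₂| + |z t₁ - z t₂| / t₂))
    (m : ℕ) (t : Fin (m + 1) → ℝ) (ht : StrictMono t)
    (htI : ∀ j, t j ∈ Set.Icc a b) :
    ∑ j : Fin m, |w (t j.castSucc) - w (t j.succ)| ^ q ≤ 2 * H * K * b / a :=
  trace_fractional_BV_estimate_general a b ha hab z hz_nonpos hz_anti K hzb H q hH w hw m t ht htI
end

section
/- Let s ∈ (0, 1], 0 < c ≤ d, and x_j, τ_j (j = 1, …, m) reals with 0 ≤ x₁ < x₂ < ⋯ < x_m ≤ B and c ≤ τ₁ ≤ τ₂ ≤ ⋯ ≤ τ_m ≤ d. Then Σ_{j=1}^{m-1} |x_j/τ_j - x_{j+1}/τ_{j+1}|^{1/s} ≤ 2^{1/s} (B/c)^{1/s}. -/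
/-!
Write `a/t - a'/t' = (a' - a)/t' - a (1/t - 1/t')`: both pieces are nonnegative, the first is at
most `(a' - a)/c` and the second at most `B (1/t - 1/t')`. Summing over consecutive pairs, both
bounds telescope, so the total variation of `x_j / τ_j` is at most `2 B / c`. Since `1/s ≥ 1`,
the sum of `1/s`-th powers is at most the `1/s`-th power of the sum.
-/

open Finset

lemma Real.sum_rpow_le_rpow_sum {ι : Type*} (s : Finset ι) (f : ι → ℝ) {p : ℝ} (hp : 1 ≤ p)
    (hf : ∀ i ∈ s, 0 ≤ f i) : ∑ i ∈ s, f i ^ p ≤ (∑ i ∈ s, f i) ^ p := by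
  induction s using Finset.cons_induction with
  | empty => simp [Real.zero_rpow (by positivity : p ≠ 0)]
  | cons a s _ ih =>
    rw [forall_mem_cons] at hf
    simp only [sum_cons]
    calc f a ^ p + ∑ i ∈ s, f i ^ p ≤ f a ^ p + (∑ i ∈ s, f i) ^ p := by gcongr; exact ih hf.2
      _ ≤ (f a + ∑ i ∈ s, f i) ^ p :=
        Real.add_rpow_le_rpow_add hf.1 (sum_nonneg hf.2) hp

lemma Fin.sum_univ_succ_sub_castSucc {M : Type*} [AddCommGroup M] {m : ℕ} (f : Fin (m + 1) → M) :
    ∑ j : Fin m, (f j.succ - f j.castSucc) = f (Fin.last m) - f 0 := by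
  induction m with
  | zero => simp
  | succ n ih =>
    have h := ih (f ∘ Fin.succ)
    simp only [Function.comp_apply, Fin.succ_castSucc, Fin.succ_last] at h
    rw [Fin.sum_univ_succ, h, Fin.castSucc_zero]
    abel

lemma abs_div_sub_div_le {a a' t t' B c : ℝ} (ha : 0 ≤ a) (haa' : a ≤ a') (haB : a ≤ B)
    (hc : 0 < c) (hct : c ≤ t) (htt' : t ≤ t') :
    |a / t - a' / t'| ≤ (a' - a) / c + B * (1 / t - 1 / t') := by
  have ht : 0 < t := hc.trans_le hct
  have hinv : 0 ≤ 1 / t - 1 / t' := sub_nonneg.2 (one_div_le_one_div_of_le ht htt')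
  have hsplit : a' / t' - a / t = (a' - a) / t' - a * (1 / t - 1 / t') := by
    field_simp [ht.ne', (ht.trans_le htt').ne']
    ring
  rw [abs_sub_comm, hsplit]
  calc |(a' - a) / t' - a * (1 / t - 1 / t')|
      ≤ |(a' - a) / t'| + |a * (1 / t - 1 / t')| := abs_sub _ _
    _ = (a' - a) / t' + a * (1 / t - 1 / t') := by
      rw [abs_of_nonneg (div_nonneg (sub_nonneg.2 haa') (ht.le.trans htt')),
        abs_of_nonneg (mul_nonneg ha hinv)]
    _ ≤ (a' - a) / c + B * (1 / t - 1 / t') := by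
      gcongr
      exact hct.trans htt'

lemma sum_abs_div_sub_div_le {m : ℕ} {x τ : Fin (m + 1) → ℝ} {B c : ℝ} (hx : Monotone x)
    (hx0 : 0 ≤ x 0) (hxB : x (Fin.last m) ≤ B) (hτ : Monotone τ) (hc : 0 < c) (hτc : c ≤ τ 0) :
    ∑ j : Fin m, |x j.castSucc / τ j.castSucc - x j.succ / τ j.succ| ≤ 2 * (B / c) := by
  have hx_nonneg (k : Fin (m + 1)) : 0 ≤ x k := hx0.trans (hx (Fin.zero_le k))
  have hx_le (k : Fin (m + 1)) : x k ≤ B := (hx (Fin.le_last k)).trans hxB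
  have hB : 0 ≤ B := (hx_nonneg 0).trans (hx_le 0)
  have hτ_last : 0 < τ (Fin.last m) := hc.trans_le (hτc.trans (hτ (Fin.zero_le _)))
  calc ∑ j : Fin m, |x j.castSucc / τ j.castSucc - x j.succ / τ j.succ|
      ≤ ∑ j : Fin m, ((x j.succ - x j.castSucc) / c + B * (1 / τ j.castSucc - 1 / τ j.succ)) :=
        sum_le_sum fun j _ ↦ abs_div_sub_div_le (hx_nonneg _) (hx j.castSucc_le_succ)
          (hx_le _) hc (hτc.trans (hτ (Fin.zero_le _))) (hτ j.castSucc_le_succ)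
    _ = ∑ j : Fin m, ((x j.succ / c - B / τ j.succ) - (x j.castSucc / c - B / τ j.castSucc)) :=
        sum_congr rfl fun j _ ↦ by ring
    _ = x (Fin.last m) / c - B / τ (Fin.last m) - (x 0 / c - B / τ 0) :=
        Fin.sum_univ_succ_sub_castSucc fun k ↦ x k / c - B / τ k
    _ ≤ B / c - 0 - (0 - B / c) := by
      gcongr
      · positivity
      · positivity
    _ = 2 * (B / c) := by ring

theorem spatial_sum_estimate_general
    (s : ℝ) (hs0 : 0 < s) (hs1 : s ≤ 1)
    (c B : ℝ) (hc : 0 < c)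
    (m : ℕ) (x τ : Fin (m + 1) → ℝ)
    (hx_mono : StrictMono x) (hx0 : 0 ≤ x 0) (hxB : x (Fin.last m) ≤ B)
    (hτ_mono : Monotone τ) (hτc : c ≤ τ 0) :
    ∑ j : Fin m, |x j.castSucc / τ j.castSucc - x j.succ / τ j.succ| ^ (1 / s) ≤
      2 ^ (1 / s) * (B / c) ^ (1 / s) := by
  have hp : 1 ≤ 1 / s := by rw [le_div_iff₀ hs0]; linarith
  have hB : 0 ≤ B := hx0.trans ((hx_mono.monotone (Fin.zero_le _)).trans hxB)
  calc ∑ j : Fin m, |x j.castSucc / τ j.castSucc - x j.succ / τ j.succ| ^ (1 / s)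
      ≤ (∑ j : Fin m, |x j.castSucc / τ j.castSucc - x j.succ / τ j.succ|) ^ (1 / s) :=
        Real.sum_rpow_le_rpow_sum _ _ hp fun _ _ ↦ abs_nonneg _
    _ ≤ (2 * (B / c)) ^ (1 / s) := by
        gcongr
        exact sum_abs_div_sub_div_le hx_mono.monotone hx0 hxB hτ_mono hc hτc
    _ = 2 ^ (1 / s) * (B / c) ^ (1 / s) := Real.mul_rpow zero_le_two (by positivity)

/-- The key spatial computation: if `0 ≤ x₁ < ⋯ < x_m ≤ B` and
`c ≤ τ₁ ≤ ⋯ ≤ τ_m ≤ d` with `0 < c ≤ d`, then for `s ∈ (0,1]`,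
`Σ |x_j/τ_j - x_{j+1}/τ_{j+1}|^(1/s) ≤ 2^(1/s) (B/c)^(1/s)`. -/
theorem spatial_sum_estimate
    (s : ℝ) (hs0 : 0 < s) (hs1 : s ≤ 1)
    (c d B : ℝ) (hc : 0 < c) (hcd : c ≤ d)
    (m : ℕ) (x τ : Fin (m + 1) → ℝ)
    (hx_mono : StrictMono x) (hx0 : 0 ≤ x 0) (hxB : x (Fin.last m) ≤ B)
    (hτ_mono : Monotone τ) (hτc : c ≤ τ 0) (hτd : τ (Fin.last m) ≤ d) :
    ∑ j : Fin m, |x j.castSucc / τ j.castSucc - x j.succ / τ j.succ| ^ (1 / s) ≤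
      2 ^ (1 / s) * (B / c) ^ (1 / s) :=
  spatial_sum_estimate_general s hs0 hs1 c B hc m x τ hx_mono hx0 hxB hτ_mono hτc
end
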